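/- If w and w' are two distinct area sequences of Dyck paths of length n, then the posets P(w) and P(w') are not isomorphic. -/

import Mathlib

/-- The poset `P(w)` of a part listing `w`: `i ≺ j` iff `w j − w i ≥ 2`,
or `w j − w i = 1` and `i < j`. -/
def Prel {n : ℕ} (w : Fin n → ℕ) (i j : Fin n) : Prop :=
  w i + 2 ≤ w j ∨ (w j = w i + 1 ∧ i < j)

/-- An area sequence of a Dyck path: `a₁ = 0` and `aᵢ ≤ aᵢ₋₁ + 1`. -/
def IsAreaSeq {n : ℕ} (w : Fin n → ℕ) : Prop :=
  (∀ h : 0 < n, w ⟨0, h⟩ = 0) ∧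
  ∀ i : Fin n, ∀ h : i.val + 1 < n, w ⟨i.val + 1, h⟩ ≤ w i + 1

/-! An isomorphism `e : P(w) ≅ P(w')` preserves levels: in `P(w)` every relation raises `w` by at
least one, while an area sequence reaches level `c + 1` at `i` only after passing through level `c`
at an earlier position, which is then below `i`; so `w i` is the height of `i`. Chains through
consecutive levels then show that `e` keeps the order of any two positions at different levels.
Such a level-preserving shuffle cannot change the sequence: at the first position `k` where `w` and
`w'` differ, the positions of level `w k` preceded by at most as many off-level positions as `k`
are one more for `w` than for `w'`, yet `e` matches them up. -/

open Finset

section LevelCount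

variable {ι α : Type*} [LinearOrder ι]

lemma lt_iff_lt_of_ne {w : ι → α} {e : ι ≃ ι} (horder : ∀ i j, w i ≠ w j → i < j → e i < e j)
    {i j : ι} (h : w i ≠ w j) : i < j ↔ e i < e j := by
  refine ⟨horder i j h, fun he => ?_⟩
  by_contra! hji
  exact (horder j i (Ne.symm h) (hji.lt_of_ne fun hji => h (congrArg w hji).symm)).asymm he

variable [Fintype ι] [DecidableEq α]

def offLevelCount (w : ι → α) (a : α) (i : ι) : ℕ :=
  #{j | j < i ∧ w j ≠ a}

variable {w w' : ι → α} {a : α}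

lemma offLevelCount_mono : Monotone (offLevelCount w a) :=
  fun _ _ hik => card_le_card fun j hj => by
    simp only [mem_filter, mem_univ, true_and] at hj ⊢
    exact ⟨hj.1.trans_le hik, hj.2⟩

lemma offLevelCount_lt {k i : ι} (hki : k < i) (hk : w k ≠ a) :
    offLevelCount w a k < offLevelCount w a i := by
  refine card_lt_card ((ssubset_iff_of_subset fun j hj => ?_).2 ⟨k, ?_, ?_⟩) <;>
    simp only [mem_filter, mem_univ, true_and] at * <;> grind

lemma offLevelCount_congr {k : ι} (h : ∀ j < k, w j = w' j) :
    offLevelCount w a k = offLevelCount w' a k := by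
  unfold offLevelCount
  congr 1
  exact filter_congr fun j _ => and_congr_right fun hj => by rw [h j hj]

variable {e : ι ≃ ι}

lemma offLevelCount_apply (hlevel : ∀ i, w' (e i) = w i)
    (horder : ∀ i j, w i ≠ w j → i < j → e i < e j) {i : ι} (hi : w i = a) :
    offLevelCount w' a (e i) = offLevelCount w a i := by
  refine (card_equiv e fun j => ?_).symm
  simp only [mem_filter, mem_univ, true_and, hlevel]
  exact and_congr_left fun hj => lt_iff_lt_of_ne horder (hi ▸ hj)

lemma card_level_offLevelCount_le (hlevel : ∀ i, w' (e i) = w i)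
    (horder : ∀ i j, w i ≠ w j → i < j → e i < e j) (m : ℕ) :
    #{i | w i = a ∧ offLevelCount w a i ≤ m} = #{i | w' i = a ∧ offLevelCount w' a i ≤ m} := by
  refine card_equiv e fun i => ?_
  simp only [mem_filter, mem_univ, true_and, hlevel]
  exact and_congr_right fun hi => by rw [offLevelCount_apply hlevel horder hi]

theorem eq_of_equiv_of_lt_of_ne (hlevel : ∀ i, w' (e i) = w i)
    (horder : ∀ i j, w i ≠ w j → i < j → e i < e j) : w = w' := by
  by_contra hne
  have hdiff : ({k | w k ≠ w' k} : Finset ι).Nonempty := by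
    obtain ⟨k, hk⟩ := Function.ne_iff.1 hne
    exact ⟨k, by simpa using hk⟩
  set k := min' _ hdiff
  have hk : w k ≠ w' k := by simpa using min'_mem _ hdiff
  have hprefix : ∀ j < k, w j = w' j := fun j hj => by
    by_contra h
    exact (min'_le _ j (by simpa using h)).not_gt hj
  set a := w k
  set m := offLevelCount w a k
  have hm : offLevelCount w' a k = m := (offLevelCount_congr hprefix).symm
  have hP : ({i | i < k ∧ w i = a} : Finset ι) ⊂
      ({i | w i = a ∧ offLevelCount w a i ≤ m} : Finset ι) := by
    refine (ssubset_iff_of_subset fun i hi => ?_).2 ⟨k, by simp [a, m], by simp⟩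
    simp only [mem_filter, mem_univ, true_and] at hi ⊢
    exact ⟨hi.2, offLevelCount_mono hi.1.le⟩
  have hR : ({i | w' i = a ∧ offLevelCount w' a i ≤ m} : Finset ι) ⊆
      ({i | i < k ∧ w i = a} : Finset ι) := by
    intro i hi
    simp only [mem_filter, mem_univ, true_and] at hi ⊢
    have hik : i < k := by
      by_contra! hki
      rcases hki.lt_or_eq with hki | rfl
      · exact (offLevelCount_lt hki fun h => hk h.symm).not_ge (hm ▸ hi.2)
      · exact hk hi.1.symm
    exact ⟨hik, hprefix i hik ▸ hi.1⟩
  exact (card_lt_card hP).not_ge (card_level_offLevelCount_le hlevel horder m ▸ card_le_card hR)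

end LevelCount

lemma lt_of_map_prel_of_eq_add_one {n m : ℕ} {w : Fin n → ℕ} {w' : Fin m → ℕ}
    {f : Fin n → Fin m} (hf : ∀ i j, Prel w i j → Prel w' (f i) (f j))
    (hlevel : ∀ i, w' (f i) = w i) {i j : Fin n} (hij : i < j) (h : w j = w i + 1) :
    f i < f j := by
  rcases hf i j (Or.inr ⟨h, hij⟩) with h' | ⟨-, h'⟩
  · rw [hlevel, hlevel] at h'
    omega
  · exact h'

namespace IsAreaSeq

variable {n : ℕ} {w : Fin n → ℕ}

lemma exists_last_eq_of_lt (hw : IsAreaSeq w) {c : ℕ} {j : Fin n} (hc : c < w j) :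
    ∃ q < j, w q = c ∧ ∀ i, q < i → i < j → c < w i := by
  obtain ⟨k, hk⟩ := j
  induction k with
  | zero => simp [hw.1 hk] at hc
  | succ k ih =>
    let p : Fin n := ⟨k, by omega⟩
    have hpj : p < ⟨k + 1, hk⟩ := Nat.lt_succ_self k
    have hstep : w ⟨k + 1, hk⟩ ≤ w p + 1 := hw.2 p hk
    rcases (by omega : c = w p ∨ c < w p) with h | h
    · refine ⟨p, hpj, h.symm, fun i hpi hij => ?_⟩
      have : k < i.val := hpi
      have : i.val < k + 1 := hij
      omega
    · obtain ⟨q, hqp, hqc, hbetween⟩ := ih p.isLt h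
      refine ⟨q, hqp.trans hpj, hqc, fun i hqi hij => ?_⟩
      rcases (Fin.lt_or_le i p) with hip | hpi
      · exact hbetween i hqi hip
      · have : i.val < k + 1 := hij
        have : k ≤ i.val := hpi
        exact (Fin.ext (show i.val = k by omega) : i = p) ▸ h

lemma le_of_map_prel (hw : IsAreaSeq w) {m : ℕ} {w' : Fin m → ℕ} {f : Fin n → Fin m}
    (hf : ∀ i j, Prel w i j → Prel w' (f i) (f j)) (i : Fin n) : w i ≤ w' (f i) := by
  induction hv : w i generalizing i with
  | zero => exact Nat.zero_le _
  | succ v ih =>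
    obtain ⟨q, hqi, hqv, -⟩ := hw.exists_last_eq_of_lt (j := i) (c := v) (by omega)
    have := ih q hqv
    rcases hf q i (Or.inr ⟨by omega, hqi⟩) with h | ⟨h, -⟩ <;> omega

lemma lt_of_map_prel (hw : IsAreaSeq w) {m : ℕ} {w' : Fin m → ℕ} {f : Fin n → Fin m}
    (hf : ∀ i j, Prel w i j → Prel w' (f i) (f j))
    (hlevel : ∀ i, w' (f i) = w i) {i j : Fin n} (hij : i < j) (hlt : w i < w j) :
    f i < f j := by
  induction hv : w j using Nat.strong_induction_on generalizing j with
  | _ v ih =>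
    rcases (by omega : w j = w i + 1 ∨ w i + 1 < w j) with h | h
    · exact lt_of_map_prel_of_eq_add_one hf hlevel hij h
    · obtain ⟨q, hqj, hq, hbetween⟩ := hw.exists_last_eq_of_lt (j := j) (c := w j - 1) (by omega)
      have hiq : i < q := by
        by_contra! hqi
        rcases hqi.lt_or_eq with hqi | rfl
        · exact absurd (hbetween i hqi hij) (by omega)
        · omega
      exact (ih (w q) (by omega) hiq (by omega) rfl).trans
        (lt_of_map_prel_of_eq_add_one hf hlevel hqj (by omega))

end IsAreaSeq

/-- If `w` and `w'` are two distinct area sequences of Dyck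
paths of length `n`, then the posets `P(w)` and `P(w')` are not isomorphic. -/
theorem distinct_areaSeq_not_iso {n : ℕ} (w w' : Fin n → ℕ)
    (hw : IsAreaSeq w) (hw' : IsAreaSeq w') (hne : w ≠ w') :
    ¬ ∃ e : Fin n ≃ Fin n, ∀ i j : Fin n, Prel w i j ↔ Prel w' (e i) (e j) := by
  rintro ⟨e, he⟩
  have hf : ∀ i j, Prel w i j → Prel w' (e i) (e j) := fun i j => (he i j).1
  have hg : ∀ i j, Prel w' i j → Prel w (e.symm i) (e.symm j) :=
    fun i j h => (he _ _).2 (by simpa using h)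
  have hlevel : ∀ i, w' (e i) = w i := fun i =>
    le_antisymm (by simpa using hw'.le_of_map_prel hg (e i)) (hw.le_of_map_prel hf i)
  have hlevel' : ∀ i, w (e.symm i) = w' i := fun i => by simpa using (hlevel (e.symm i)).symm
  refine hne (eq_of_equiv_of_lt_of_ne hlevel fun i j hwij hij => ?_)
  rcases hwij.lt_or_gt with hwij | hwji
  · exact hw.lt_of_map_prel hf hlevel hij hwij
  · by_contra hle
    have hji : e j < e i := (not_lt.1 hle).lt_of_ne (e.injective.ne hij.ne')
    have := hw'.lt_of_map_prel hg hlevel' hji (by rwa [hlevel, hlevel])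
    simp only [Equiv.symm_apply_apply] at this
    exact this.asymm hij
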